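/- arXiv:0912.0869 — 7 statements merged into one kernel-verified Lean document; each statement's English description precedes it below -/
import Mathlib

section
/- For an integer t ≥ 0, both 2^t + 1 and 2^(t+1) + 1 are prime powers if and only if 0 ≤ t ≤ 3. -/
open Finset in
lemma aux_catalan (n p m : ℕ) (hn : 4 ≤ n) (hp : p.Prime) (hm : 2 ≤ m)
    (h : 2 ^ n + 1 = p ^ m) : False := by
  have hp2 : 2 ≤ p := hp.two_le
  have h2n : (16 : ℕ) ≤ 2 ^ n := by
    calc (16 : ℕ) = 2 ^ 4 := by norm_num
    _ ≤ 2 ^ n := Nat.pow_le_pow_right (by norm_num) hn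
  have hpodd : Odd p := by
    rcases hp.eq_two_or_odd' with h2 | ho
    · subst h2
      have h1 : (2:ℕ) ∣ 2 ^ n := dvd_pow_self 2 (by omega)
      have h2 : (2:ℕ) ∣ 2 ^ m := dvd_pow_self 2 (by omega)
      omega
    · exact ho
  have hp3 : 3 ≤ p := by
    obtain ⟨j, hj⟩ := hpodd; omega
  rcases Nat.even_or_odd m with hme | hmo
  · -- m even
    obtain ⟨k, hk⟩ := hme
    have hk1 : 1 ≤ k := by omega
    have hpk : 3 ≤ p ^ k := le_trans hp3 (Nat.le_self_pow (by omega) p)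
    obtain ⟨q, hq⟩ : ∃ q, p ^ k = q + 3 := ⟨p ^ k - 3, by omega⟩
    have he : 2 ^ n = (p ^ k - 1) * (p ^ k + 1) := by
      have hsq : p ^ m = p ^ k * p ^ k := by rw [hk, pow_add]
      rw [hsq, hq] at h
      rw [hq]
      have : (q + 3) * (q + 3) = (q + 3 - 1) * (q + 3 + 1) + 1 := by
        have : (q + 3) * (q + 3) = (q + 2) * (q + 4) + 1 := by ring
        simpa using this
      omega
    obtain ⟨a, _, ha⟩ := (Nat.dvd_prime_pow Nat.prime_two).mp ⟨_, he⟩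
    obtain ⟨b, _, hb⟩ := (Nat.dvd_prime_pow Nat.prime_two).mp
      (⟨p ^ k - 1, by rw [he, mul_comm]⟩ : (p ^ k + 1) ∣ 2 ^ n)
    rw [ha, hb, ← pow_add] at he
    have hab : n = a + b := Nat.pow_right_injective le_rfl he
    have hb2 : 2 ≤ b := by
      by_contra hb'
      have h1 : 2 ^ b ≤ 2 := by
        calc 2 ^ b ≤ 2 ^ 1 := Nat.pow_le_pow_right (by norm_num) (by omega)
        _ = 2 := by norm_num
      omega
    have h4b : 2 ^ b = 4 * 2 ^ (b - 2) := by
      rw [show b = 2 + (b - 2) by omega, pow_add]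
      norm_num
    rcases Nat.lt_or_ge a 2 with ha2 | ha2
    · interval_cases a
      · norm_num at ha
        omega
      · -- p^k = 3, 2^b = 4
        have hpk3 : p ^ k = 3 := by
          have : (2:ℕ) ^ 1 = 2 := by norm_num
          omega
        have hb4 : (2:ℕ) ^ 2 = 2 ^ b := by
          rw [show (2:ℕ) ^ 2 = 4 from by norm_num]
          omega
        have := Nat.pow_right_injective le_rfl hb4
        omega
    · have h4a : 2 ^ a = 4 * 2 ^ (a - 2) := by
        rw [show a = 2 + (a - 2) by omega, pow_add]
        norm_num
      omega
  · -- m odd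
    have key : (∑ i ∈ range m, (p:ℤ) ^ i) * ((p:ℤ) - 1) = 2 ^ n := by
      rw [geom_sum_mul]
      have : ((p:ℤ)) ^ m = 2 ^ n + 1 := by exact_mod_cast h.symm
      rw [this]; ring
    set S := ∑ i ∈ range m, (p:ℤ) ^ i with hS
    have hS1 : (1:ℤ) ≤ S := by
      have := Finset.single_le_sum (f := fun i => (p:ℤ) ^ i)
        (fun i _ => pow_nonneg (by positivity) i) (Finset.mem_range.mpr (by omega : 0 < m))
      simpa using this
    have hSodd : ¬ (2:ℤ) ∣ S := by
      intro hdvd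
      have h0 : ((S : ℤ) : ZMod 2) = 0 := by
        rw [ZMod.intCast_zmod_eq_zero_iff_dvd]
        exact_mod_cast hdvd
      have hp1 : ((p:ℕ) : ZMod 2) = 1 := by
        obtain ⟨j, hj⟩ := hpodd
        rw [hj]
        push_cast
        rw [show ((2:ZMod 2)) = 0 by decide]
        ring
      rw [hS] at h0
      push_cast at h0
      rw [hp1] at h0
      simp only [one_pow, Finset.sum_const, Finset.card_range, nsmul_eq_mul, mul_one] at h0
      have : (2:ℕ) ∣ m := by
        rwa [ZMod.natCast_eq_zero_iff] at h0
      obtain ⟨j, hj⟩ := hmo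
      omega
    have hSdvd : S ∣ (2:ℤ) ^ n := ⟨(p:ℤ) - 1, key.symm⟩
    have hsdvd : S.natAbs ∣ 2 ^ n := by
      have h1 : ((S.natAbs : ℤ)) ∣ (2:ℤ) ^ n := Int.natAbs_dvd.mpr hSdvd
      exact_mod_cast h1
    have hsodd : ¬ (2:ℕ) ∣ S.natAbs := by
      intro hd
      exact hSodd (Int.natAbs_dvd_natAbs.mp (by simpa using hd))
    have hcop : Nat.Coprime S.natAbs (2 ^ n) :=
      Nat.Coprime.pow_right _
        ((Nat.Prime.coprime_iff_not_dvd Nat.prime_two).mpr hsodd).symm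
    have hs1 : S.natAbs = 1 := by
      have := Nat.gcd_eq_left hsdvd
      rw [Nat.Coprime] at hcop
      omega
    have hSeq : S = 1 := by omega
    rw [hSeq, one_mul] at key
    have hpval : p = 2 ^ n + 1 := by
      have : (p:ℤ) = 2 ^ n + 1 := by linarith
      exact_mod_cast this
    have : p ^ 1 = p ^ m := by rw [pow_one]; omega
    have := Nat.pow_right_injective hp2 this
    omega

lemma not_primePow_of_odd (n : ℕ) (hn : 5 ≤ n) (ho : Odd n) :
    ¬ IsPrimePow (2 ^ n + 1) := by
  rintro ⟨p, m, hp, hm, hpm⟩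
  have hp' : p.Prime := Nat.prime_iff.mpr hp
  rcases Nat.lt_or_ge m 2 with hm2 | hm2
  · have hm1 : m = 1 := by omega
    rw [hm1, pow_one] at hpm
    have h3 : (3:ℕ) ∣ 2 ^ n + 1 := by
      have : ((2 ^ n + 1 : ℕ) : ZMod 3) = 0 := by
        push_cast
        rw [show ((2:ZMod 3)) = -1 by decide, ho.neg_one_pow]
        ring
      rwa [ZMod.natCast_eq_zero_iff] at this
    rw [← hpm] at h3
    have := (hp'.eq_one_or_self_of_dvd 3 h3).resolve_left (by norm_num)
    have h2n : (32 : ℕ) ≤ 2 ^ n := by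
      calc (32 : ℕ) = 2 ^ 5 := by norm_num
      _ ≤ 2 ^ n := Nat.pow_le_pow_right (by norm_num) hn
    omega
  · exact aux_catalan n p m (by omega) hp' hm2 hpm.symm

lemma primePow_of (n p k : ℕ) (hp : Nat.Prime p) (hk : 0 < k) (he : p ^ k = n) :
    IsPrimePow n := ⟨p, k, hp.prime, hk, he⟩

theorem two_pow_add_one_both_primePow_iff (t : ℕ) :
    (IsPrimePow (2 ^ t + 1) ∧ IsPrimePow (2 ^ (t + 1) + 1)) ↔ t ≤ 3 := by
  constructor
  · rintro ⟨h1, h2⟩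
    by_contra hlt
    push_neg at hlt
    rcases Nat.even_or_odd t with he | ho
    · exact not_primePow_of_odd (t + 1) (by omega) he.add_one h2
    · have h5 : 5 ≤ t := by obtain ⟨j, hj⟩ := ho; omega
      exact not_primePow_of_odd t h5 ho h1
  · intro ht
    interval_cases t
    · exact ⟨primePow_of _ 2 1 Nat.prime_two one_pos (by norm_num),
        primePow_of _ 3 1 Nat.prime_three one_pos (by norm_num)⟩
    · exact ⟨primePow_of _ 3 1 Nat.prime_three one_pos (by norm_num),
        primePow_of _ 5 1 (by norm_num) one_pos (by norm_num)⟩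
    · exact ⟨primePow_of _ 5 1 (by norm_num) one_pos (by norm_num),
        primePow_of _ 3 2 Nat.prime_three two_pos (by norm_num)⟩
    · exact ⟨primePow_of _ 3 2 Nat.prime_three two_pos (by norm_num),
        primePow_of _ 17 1 (by norm_num) one_pos (by norm_num)⟩
end

section
/- If n is an odd integer with n ≥ 4 (hence n ≥ 5), then 2^n + 1 is not a prime power. -/
lemma aux_four_pow_mod_three (m : ℕ) : 4 ^ m % 3 = 1 := by
  induction m with
  | zero => rfl
  | succ i ih => rw [pow_succ, Nat.mul_mod, ih]

lemma aux_nine_pow_mod_eight (m : ℕ) : 9 ^ m % 8 = 1 := by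
  induction m with
  | zero => rfl
  | succ i ih => rw [pow_succ, Nat.mul_mod, ih]

theorem two_pow_add_one_not_primePow_of_odd (n : ℕ) (hn : 4 ≤ n) (hodd : Odd n) :
    ¬ IsPrimePow (2 ^ n + 1) := by
  rintro ⟨p, k, hp, hk, heq⟩
  obtain ⟨m, rfl⟩ := hodd
  have h3 : 3 ∣ 2 ^ (2 * m + 1) + 1 := by
    have h : 2 ^ (2 * m + 1) + 1 = 2 * 4 ^ m + 1 := by
      rw [pow_succ, pow_mul]; ring
    rw [h]
    have := aux_four_pow_mod_three m
    omega
  have hpp : p.Prime := hp.nat_prime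
  have hp3 : p = 3 := by
    have h3p : (3 : ℕ).Prime := by norm_num
    have hd : 3 ∣ p ^ k := heq ▸ h3
    have hdp := Nat.Prime.dvd_of_dvd_pow h3p hd
    exact ((Nat.prime_dvd_prime_iff_eq h3p hpp).mp hdp).symm
  subst hp3
  have h8 : 2 ^ (2 * m + 1) % 8 = 0 := by
    apply Nat.mod_eq_zero_of_dvd
    have h82 : (8 : ℕ) = 2 ^ 3 := rfl
    rw [h82]
    exact pow_dvd_pow 2 (by omega)
  have h3k8 : 3 ^ k % 8 = 1 := by
    rw [heq]; clear heq h3 hk; show (2 ^ (2 * m + 1) + 1) % 8 = 1; omega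
  have hke : k % 2 = 0 := by
    rcases Nat.even_or_odd k with he | ho
    · obtain ⟨t, rfl⟩ := he; omega
    · exfalso
      obtain ⟨j, rfl⟩ := ho
      have h9 : 3 ^ (2 * j + 1) = 3 * 9 ^ j := by
        rw [pow_succ, pow_mul]; ring
      have h9m := aux_nine_pow_mod_eight j
      rw [h9, Nat.mul_mod, h9m] at h3k8
      clear heq h3; omega
  obtain ⟨j, rfl⟩ : ∃ j, k = 2 * j := ⟨k / 2, by omega⟩
  have h1 : 1 ≤ 3 ^ j := Nat.one_le_pow _ _ (by norm_num)
  have hfac : 2 ^ (2 * m + 1) = (3 ^ j + 1) * (3 ^ j - 1) := by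
    have hs : (3 ^ j) ^ 2 - 1 ^ 2 = (3 ^ j + 1) * (3 ^ j - 1) := Nat.sq_sub_sq _ _
    have hpm : (3 ^ j) ^ 2 = 3 ^ (2 * j) := by rw [← pow_mul]; ring_nf
    rw [hpm, one_pow] at hs
    rw [← hs, heq]
    exact (Nat.add_sub_cancel _ _).symm
  have hd1 : (3 ^ j - 1) ∣ 2 ^ (2 * m + 1) := ⟨3 ^ j + 1, by rw [hfac]; ring⟩
  have hd2 : (3 ^ j + 1) ∣ 2 ^ (2 * m + 1) := ⟨3 ^ j - 1, hfac⟩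
  obtain ⟨a, ha, hae⟩ := (Nat.dvd_prime_pow Nat.prime_two).mp hd1
  obtain ⟨b, hb, hbe⟩ := (Nat.dvd_prime_pow Nat.prime_two).mp hd2
  obtain ⟨x, hx⟩ : ∃ x, 3 ^ j = x := ⟨_, rfl⟩
  rw [hx] at hae hbe h1
  have hdiff : 2 ^ b = 2 ^ a + 2 := by clear heq h3 h3k8 hfac; omega
  have ha1 : a ≤ 1 := by
    by_contra h
    have h4a : (4 : ℕ) ≤ 2 ^ a := by
      calc (4 : ℕ) = 2 ^ 2 := rfl
      _ ≤ 2 ^ a := Nat.pow_le_pow_right (by norm_num) (by omega)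
    have hble : 2 ≤ b := by
      by_contra hb2
      interval_cases b <;> clear heq h3 h3k8 hfac <;> omega
    have h2b : (4 : ℕ) ∣ 2 ^ b := by
      have h42 : (4 : ℕ) = 2 ^ 2 := rfl
      rw [h42]; exact pow_dvd_pow 2 hble
    have h2a : (4 : ℕ) ∣ 2 ^ a := by
      have h42 : (4 : ℕ) = 2 ^ 2 := rfl
      rw [h42]; exact pow_dvd_pow 2 (by omega)
    clear heq h3 h3k8 hfac
    omega
  interval_cases a
  · -- x = 2, i.e. 3^j = 2, impossible
    have h32 : 3 ^ j = 2 := by rw [hx]; clear heq h3 h3k8 hfac; omega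
    rcases j with _ | j
    · simp at h32
    · have : 3 ≤ 3 ^ (j + 1) := Nat.le_self_pow (by omega) 3
      omega
  · -- x = 3, i.e. 3^j = 3 → j = 1 → 2^n = 8, contra n ≥ 5
    have h3j : 3 ^ j = 3 := by rw [hx]; clear heq h3 h3k8 hfac; omega
    have hj1 : j = 1 := by
      rcases j with _ | _ | j
      · simp at h3j
      · rfl
      · have : 9 ≤ 3 ^ (j + 2) := by
          calc (9 : ℕ) = 3 ^ 2 := rfl
          _ ≤ 3 ^ (j + 2) := Nat.pow_le_pow_right (by norm_num) (by omega)
        omega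
    subst hj1
    norm_num at hfac
    have h16 : 2 ^ 5 ≤ 2 ^ (2 * m + 1) := Nat.pow_le_pow_right (by norm_num) (by omega)
    norm_num at h16
    omega
end

section
/- If n > 3, n ≠ 6, and n is not prime, then 2^n − 1 is not a prime power. -/
/-!
Write a composite `n` as `q * k` with `q, k ≥ 2` and put `x = 2 ^ q`. If `x ^ k - 1 = p ^ m`, then
`p` divides `x - 1`, which is odd, so lifting the exponent gives
`v_p (x ^ k - 1) = v_p (x - 1) + v_p k`, whence `p ^ m ≤ (x - 1) * k`. But `(x - 1) * k < x ^ k - 1`.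
-/

namespace Nat

theorem sub_one_mul_lt_pow_sub_one {x k : ℕ} (hx : 2 ≤ x) (hk : 2 ≤ k) :
    (x - 1) * k < x ^ k - 1 := by
  obtain ⟨y, rfl⟩ : ∃ y, x = y + 1 := ⟨x - 1, by omega⟩
  suffices y * k + 1 < (y + 1) ^ k by simpa using lt_sub_of_add_lt this
  induction k, hk using Nat.le_induction with
  | base => nlinarith
  | succ k _ ih =>
    have : 1 ≤ (y + 1) ^ k := one_le_pow _ _ (by omega)
    rw [pow_succ]
    nlinarith

theorem pow_padicValNat_pow_sub_one_le {p x k : ℕ} [Fact p.Prime] (hp : Odd p) (hx : 1 < x)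
    (hpx : p ∣ x - 1) (hk : k ≠ 0) : p ^ padicValNat p (x ^ k - 1) ≤ (x - 1) * k := by
  have hpx' : ¬p ∣ x := fun h ↦ by
    have := Nat.dvd_sub h hpx
    rw [Nat.sub_sub_self hx.le] at this
    exact Prime.not_dvd_one Fact.out this
  have lte := padicValNat.pow_sub_pow hp hx hpx hpx' hk
  rw [one_pow] at lte
  rw [lte, pow_add]
  exact Nat.mul_le_mul (le_of_dvd (by omega) pow_padicValNat_dvd)
    (le_of_dvd (pos_of_ne_zero hk) pow_padicValNat_dvd)

theorem not_isPrimePow_pow_sub_one {x k : ℕ} (hx : Even x) (hx2 : 2 < x) (hk : 2 ≤ k) :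
    ¬IsPrimePow (x ^ k - 1) := by
  rintro ⟨p, m, hp, -, hpm⟩
  rw [← prime_iff] at hp
  have := Fact.mk hp
  have hpx : p ∣ x - 1 := by
    have hdvd : x - 1 ∣ p ^ m := hpm ▸ by simpa using Nat.sub_dvd_pow_sub_pow x 1 k
    obtain ⟨i, -, hi⟩ := (dvd_prime_pow hp).mp hdvd
    have hi0 : i ≠ 0 := by rintro rfl; simp at hi; omega
    exact hi ▸ dvd_pow_self p hi0
  have hp_odd : Odd p := Odd.of_dvd_nat (Even.sub_odd (by omega) hx odd_one) hpx
  have hle := pow_padicValNat_pow_sub_one_le hp_odd (by omega) hpx (by omega : k ≠ 0)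
  rw [← hpm, padicValNat.prime_pow, hpm] at hle
  exact (sub_one_mul_lt_pow_sub_one (by omega) hk).not_ge hle

end Nat

theorem two_pow_sub_one_not_primePow_general (n : ℕ) (h3 : 3 < n)
    (hnp : ¬ n.Prime) : ¬ IsPrimePow (2 ^ n - 1) := by
  obtain ⟨q, k, hq, hk, rfl⟩ := (Nat.not_prime_iff_exists_mul_eq (by omega)).mp hnp
  have hq2 : 2 ≤ q := by
    rcases q with _ | _ | q <;> simp_all
  have hk2 : 2 ≤ k := by
    rcases k with _ | _ | k <;> simp_all
  have hx : 2 < 2 ^ q := lt_of_lt_of_le (by norm_num) (Nat.pow_le_pow_right two_pos hq2)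
  rw [pow_mul]
  exact Nat.not_isPrimePow_pow_sub_one (even_two.pow_of_ne_zero (by omega)) hx hk2

theorem two_pow_sub_one_not_primePow (n : ℕ) (h3 : 3 < n) (h6 : n ≠ 6)
    (hnp : ¬ n.Prime) : ¬ IsPrimePow (2 ^ n - 1) :=
  two_pow_sub_one_not_primePow_general n h3 hnp
end

section
/- Let G be a finite group, K ⊴ H ≤ G, and suppose there exists a subgroup L ≤ G such that G = HL and H ∩ L = K. Then H ∩ K^G = K, where K^G denotes the normal closure of K in G. -/
theorem special_of_complement {G : Type*} [Group G] [Finite G]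
    (H K L : Subgroup G) (hKH : K ≤ H)
    (hKnorm : ∀ h ∈ H, ∀ k ∈ K, h * k * h⁻¹ ∈ K)
    (hprod : ∀ g : G, ∃ h ∈ H, ∃ l ∈ L, g = h * l)
    (hcap : H ⊓ L = K) :
    H ⊓ Subgroup.normalClosure (K : Set G) = K := by
  have hKL : K ≤ L := hcap ▸ inf_le_right
  have hNC : Subgroup.normalClosure (K : Set G) ≤ L := by
    rw [Subgroup.normalClosure]
    apply (Subgroup.closure_le L).2
    rintro x hx
    rw [Group.mem_conjugatesOfSet_iff] at hx
    obtain ⟨k, hk, c, hc⟩ := hx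
    obtain ⟨h, hh, l, hl, hgl⟩ := hprod c⁻¹
    have hc' : c = l⁻¹ * h⁻¹ := by
      have := congrArg (·⁻¹) hgl
      simpa [mul_inv_rev] using this
    have hx' : x = l⁻¹ * (h⁻¹ * k * h) * l := by
      have hcx : (c : G) * k = x * c := hc
      have : x = (c : G) * k * (c : G)⁻¹ := by
        rw [hcx]; group
      rw [this, hc']
      group
    rw [hx']
    have hk' : h⁻¹ * k * h ∈ K := by
      have := hKnorm h⁻¹ (inv_mem hh) k hk
      simpa using this
    exact L.mul_mem (L.mul_mem (inv_mem hl) (hKL hk')) hl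
  apply le_antisymm
  · intro x hx
    rw [← hcap]
    exact ⟨hx.1, hNC hx.2⟩
  · exact le_inf hKH (fun x hx => Subgroup.subset_normalClosure hx)
end

section
/- Let G be a finite group and H an NR-subgroup of G with K ⊴ G, K ≤ H. Then H/K is an NR-subgroup of G/K. -/
/-- `H` is an NR-subgroup of `G` if for every normal subgroup `K` of `H`,
the intersection of `H` with the normal closure of `K` in `G` equals `K`. -/
def IsNRSubgroup {G : Type*} [Group G] (H : Subgroup G) : Prop :=
  ∀ K : Subgroup G, K ≤ H → (∀ h ∈ H, ∀ k ∈ K, h * k * h⁻¹ ∈ K) →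
    H ⊓ Subgroup.normalClosure (K : Set G) = K

theorem isNR_quotient {G : Type*} [Group G] [Finite G] (H K : Subgroup G)
    (hH : IsNRSubgroup H) (hK : K.Normal) (hKH : K ≤ H) :
    IsNRSubgroup (H.map (QuotientGroup.mk' K)) := by
  intro L' hL'H hL'norm
  set f := QuotientGroup.mk' K
  have hf : Function.Surjective f := QuotientGroup.mk'_surjective K
  have hker : f.ker = K := QuotientGroup.ker_mk' K
  set L : Subgroup G := L'.comap f with hLdef
  have hKL : K ≤ L := by
    intro x hx
    have : f x = 1 := by
      rw [← MonoidHom.mem_ker, hker]; exact hx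
    show f x ∈ L'
    rw [this]; exact L'.one_mem
  have hLH : L ≤ H := by
    intro x hx
    have hxm : f x ∈ L' := hx
    have := hL'H hxm
    rcases this with ⟨h, hh, hfh⟩
    have : f (h⁻¹ * x) = 1 := by simp [map_mul, hfh]
    have hmem : h⁻¹ * x ∈ K := by rw [← hker]; exact this
    have : x = h * (h⁻¹ * x) := by group
    rw [this]
    exact H.mul_mem hh (hKH hmem)
  have hLnorm : ∀ h ∈ H, ∀ k ∈ L, h * k * h⁻¹ ∈ L := by
    intro h hh k hk
    have : f h * f k * (f h)⁻¹ ∈ L' :=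
      hL'norm (f h) ⟨h, hh, rfl⟩ (f k) hk
    simpa [hLdef, Subgroup.mem_comap, map_mul] using this
  have key : H ⊓ Subgroup.normalClosure (L : Set G) = L := hH L hLH hLnorm
  have hmapL : L.map f = L' := Subgroup.map_comap_eq_self_of_surjective hf L'
  -- comap of both sides equal
  apply Subgroup.comap_injective hf
  have hNnormal : (Subgroup.normalClosure ((L' : Set (G ⧸ K)))).Normal :=
    Subgroup.normalClosure_normal
  have hcomapN : (Subgroup.normalClosure ((L' : Set (G ⧸ K)))).comap f
      = Subgroup.normalClosure (L : Set G) := by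
    apply le_antisymm
    · have h1 : Subgroup.normalClosure ((L' : Set (G ⧸ K)))
          ≤ (Subgroup.normalClosure (L : Set G)).map f := by
        apply Subgroup.normalClosure_le_normal
        · rw [← hmapL]
          exact Subgroup.map_mono Subgroup.subset_normalClosure
      have h2 : ((Subgroup.normalClosure (L : Set G)).map f).comap f
          = Subgroup.normalClosure (L : Set G) ⊔ f.ker :=
        Subgroup.comap_map_eq f _
      calc (Subgroup.normalClosure ((L' : Set (G ⧸ K)))).comap f
          ≤ ((Subgroup.normalClosure (L : Set G)).map f).comap f :=
            Subgroup.comap_mono h1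
        _ = Subgroup.normalClosure (L : Set G) ⊔ f.ker := h2
        _ ≤ Subgroup.normalClosure (L : Set G) := by
            apply sup_le le_rfl
            rw [hker]
            exact le_trans hKL Subgroup.subset_normalClosure
    · have : (Subgroup.normalClosure ((L' : Set (G ⧸ K)))).comap f |>.Normal :=
        hNnormal.comap f
      apply Subgroup.normalClosure_le_normal
      intro x hx
      exact Subgroup.subset_normalClosure (by exact hx : f x ∈ L')
  rw [Subgroup.comap_inf, hcomapN, Subgroup.comap_map_eq f H, hker,
    sup_of_le_left hKH, key]
end

section
/- Let G be a finite group and H an NR-subgroup of prime index in G. If H is supersolvable, then G is supersolvable. -/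
/-- A group is supersolvable if it has a normal series (all terms normal in the whole
group) with cyclic factors. -/
def IsSupersolvable (G : Type*) [Group G] : Prop :=
  ∃ (n : ℕ) (s : Fin (n + 1) → Subgroup G),
    s 0 = ⊥ ∧ s (Fin.last n) = ⊤ ∧
    (∀ i : Fin n, s i.castSucc ≤ s i.succ) ∧
    (∀ i, (s i).Normal) ∧
    ∀ i : Fin n, ∀ _ : (s i.castSucc).Normal,
      IsCyclic ((s i.succ) ⧸ ((s i.castSucc).subgroupOf (s i.succ)))


/-!
Induction on `|G|`. A supersolvable `H ≠ 1` has a normal subgroup `A` of prime order `q`. If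
`A ⊴ G`, then `H / A` is an NR-subgroup of prime index `p` of `G / A`, so `G / A` is supersolvable
by induction, and so is `G` since `A` is cyclic. Otherwise the maximality of `H` forces
`N_G(A) = H`, and the NR property gives `H ∩ A^G = A`; hence `|A^G| = pq` and `A` is a
self-normalizing Sylow `q`-subgroup of `A^G`. By Burnside's transfer theorem `A` has a normal
complement `N` in `A^G`; it is a normal Sylow `p`-subgroup of `A^G`, hence normal in `G`, of
order `p` and not contained in `H`. So `G = HN` and `G / N` is a quotient of `H`.
-/

open Subgroup

namespace Subgroup

variable {G : Type*} [Group G]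

/-- `H` is generated by a single element modulo `K`; when `K.subgroupOf H` is normal this says
that `H ⧸ K.subgroupOf H` is cyclic, without forming the quotient. -/
def IsCyclicModulo (H K : Subgroup G) : Prop :=
  ∃ g ∈ H, ∀ x ∈ H, ∃ n : ℤ, (g ^ n)⁻¹ * x ∈ K

theorem isCyclic_quotient_subgroupOf_iff {H K : Subgroup G} [(K.subgroupOf H).Normal] :
    IsCyclic (H ⧸ K.subgroupOf H) ↔ H.IsCyclicModulo K := by
  constructor
  · rintro ⟨q, hq⟩
    obtain ⟨g, rfl⟩ := QuotientGroup.mk_surjective q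
    refine ⟨g, g.2, fun x hx => ?_⟩
    obtain ⟨n, hn⟩ := hq (⟨x, hx⟩ : H)
    dsimp only at hn
    rw [← QuotientGroup.mk_zpow, QuotientGroup.eq] at hn
    exact ⟨n, hn⟩
  · rintro ⟨g, hg, hgen⟩
    refine ⟨QuotientGroup.mk (⟨g, hg⟩ : H), fun q => ?_⟩
    obtain ⟨x, rfl⟩ := QuotientGroup.mk_surjective q
    obtain ⟨n, hn⟩ := hgen x x.2
    exact ⟨n, by dsimp only; rw [← QuotientGroup.mk_zpow, QuotientGroup.eq]; exact hn⟩

theorem isCyclicModulo_bot_iff {H : Subgroup G} : H.IsCyclicModulo ⊥ ↔ IsCyclic H := by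
  simp only [IsCyclicModulo, mem_bot, inv_mul_eq_one]
  constructor
  · rintro ⟨g, hg, hgen⟩
    refine ⟨⟨g, hg⟩, fun x => ?_⟩
    obtain ⟨n, hn⟩ := hgen x x.2
    exact ⟨n, Subtype.ext (by simpa using hn)⟩
  · rintro ⟨g, hgen⟩
    refine ⟨g, g.2, fun x hx => ?_⟩
    obtain ⟨n, hn⟩ := hgen ⟨x, hx⟩
    exact ⟨n, congrArg Subtype.val hn⟩

theorem IsCyclicModulo.map {G' : Type*} [Group G'] {H K : Subgroup G} (h : H.IsCyclicModulo K)
    (f : G →* G') : (H.map f).IsCyclicModulo (K.map f) := by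
  obtain ⟨g, hg, hgen⟩ := h
  refine ⟨f g, mem_map_of_mem f hg, ?_⟩
  rintro _ ⟨x, hx, rfl⟩
  obtain ⟨n, hn⟩ := hgen x hx
  exact ⟨n, by simpa using mem_map_of_mem f hn⟩

theorem IsCyclicModulo.comap_of_surjective {G' : Type*} [Group G'] {H K : Subgroup G'}
    (h : H.IsCyclicModulo K) {f : G →* G'} (hf : Function.Surjective f) :
    (H.comap f).IsCyclicModulo (K.comap f) := by
  obtain ⟨g, hg, hgen⟩ := h
  obtain ⟨g, rfl⟩ := hf g
  refine ⟨g, hg, fun x hx => ?_⟩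
  obtain ⟨n, hn⟩ := hgen (f x) hx
  exact ⟨n, by simpa using hn⟩

theorem characteristic_of_isCyclic [IsCyclic G] (H : Subgroup G) : H.Characteristic := by
  refine characteristic_iff_map_le.mpr fun φ => ?_
  obtain ⟨m, hm⟩ := MonoidHom.map_cyclic φ.toMonoidHom
  rintro _ ⟨x, hx, rfl⟩
  rw [hm]
  exact zpow_mem hx m

theorem exists_normal_prime_card_of_isCyclic [Finite G] (C : Subgroup G) [C.Normal]
    [IsCyclic C] (hC : C ≠ ⊥) : ∃ A : Subgroup G, A.Normal ∧ (Nat.card A).Prime := by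
  have : Nontrivial C := (nontrivial_iff_ne_bot C).mpr hC
  obtain ⟨q, hq, hqC⟩ := Nat.exists_prime_and_dvd (Finite.one_lt_card (α := C)).ne'
  have : Fact q.Prime := ⟨hq⟩
  obtain ⟨x, hx⟩ := exists_prime_orderOf_dvd_card' q hqC
  have := (zpowers x).characteristic_of_isCyclic
  refine ⟨(zpowers x).map C.subtype, inferInstance, ?_⟩
  rwa [card_map_of_injective C.subtype_injective, Nat.card_zpowers, hx]

theorem eq_or_eq_top_of_le_of_index_prime {H K : Subgroup G} (hH : H.index.Prime)
    (hHK : H ≤ K) : K = H ∨ K = ⊤ := by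
  rcases hH.eq_one_or_self_of_dvd _ (index_dvd_of_le hHK) with hK | hK
  · exact .inr (index_eq_one.mp hK)
  · refine .inl (le_antisymm (relIndex_eq_one.mp ?_) hHK)
    have := relIndex_mul_index hHK
    rw [hK] at this
    exact (Nat.mul_eq_right hH.ne_zero).mp this

theorem normalizer_eq_of_index_prime {H A : Subgroup G} (hH : H.index.Prime)
    (hHA : H ≤ normalizer (A : Set G)) (hA : ¬A.Normal) : normalizer (A : Set G) = H :=
  (eq_or_eq_top_of_le_of_index_prime hH hHA).resolve_right (hA ∘ normalizer_eq_top_iff.mp)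

end Subgroup

theorem QuotientGroup.mk'_comp_subtype_surjective {G : Type*} [Group G] {H N : Subgroup G}
    [N.Normal] (hHN : H ⊔ N = ⊤) : Function.Surjective ((mk' N).comp H.subtype) := by
  rw [← MonoidHom.range_eq_top, MonoidHom.range_comp, range_subtype, ← sup_bot_eq (H.map _),
    ← map_mk'_self N, ← Subgroup.map_sup, hHN, map_top_of_surjective _ (mk'_surjective N)]

theorem exists_characteristic_card_eq_of_normalizer_eq_self {M : Type*} [Group M] [Finite M]
    {p q : ℕ} [hp : Fact p.Prime] [hq : Fact q.Prime] (hM : Nat.card M = p * q)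
    {A : Subgroup M} (hA : Nat.card A = q) (hnA : normalizer (A : Set M) = A) :
    ∃ N : Subgroup M, N.Characteristic ∧ Nat.card N = p := by
  have hpq : p ≠ q := by
    rintro rfl
    have := IsPGroup.isMulCommutative_of_card_eq_prime_sq (hM.trans (sq p).symm)
    have hAtop : A = ⊤ :=
      hnA.symm.trans (normalizer_eq_top_iff.mpr (normal_of_isMulCommutative A))
    have hpp : p * p = p := by rw [← hM, ← card_top, ← hAtop, hA]
    exact hp.out.one_lt.ne' ((Nat.mul_eq_right hp.out.ne_zero).mp hpp)
  have hfact {r s : ℕ} (hr : r.Prime) (hs : s.Prime) (hrs : r ≠ s) :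
      (r * s).factorization s = 1 := by
    simp [Nat.factorization_mul hr.ne_zero hs.ne_zero, hr.factorization, hs.factorization, hrs]
  let P : Sylow q M := .ofCard A (by rw [hA, hM, hfact hp.out hq.out hpq, pow_one])
  have hPA : (P : Subgroup M) = A := Sylow.coe_ofCard _ _
  have : IsCyclic A := isCyclic_of_prime_card hA
  have hP : normalizer ((P : Subgroup M) : Set M) ≤ centralizer ((P : Subgroup M) : Set M) := by
    rw [hPA, hnA]
    exact le_centralizer A
  set K := (MonoidHom.transferSylow P hP).ker
  have hKcard : Nat.card K = p := by
    have := (MonoidHom.ker_transferSylow_isComplement' P hP).card_mul_card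
    rw [show Nat.card (P : Subgroup M) = q from hPA ▸ hA, hM] at this
    exact Nat.eq_of_mul_eq_mul_right hq.out.pos this
  let N : Sylow p M :=
    .ofCard K (by rw [hKcard, hM, mul_comm, hfact hq.out hp.out hpq.symm, pow_one])
  have hNK : (N : Subgroup M) = K := Sylow.coe_ofCard _ _
  exact ⟨N, N.characteristic_of_normal (hNK ▸ MonoidHom.normal_ker _), hNK ▸ hKcard⟩

section Supersolvable

variable {G : Type*} [Group G]

theorem isSupersolvable_iff_isCyclicModulo : IsSupersolvable G ↔
    ∃ (n : ℕ) (s : Fin (n + 1) → Subgroup G), s 0 = ⊥ ∧ s (Fin.last n) = ⊤ ∧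
      (∀ i : Fin n, s i.castSucc ≤ s i.succ) ∧ (∀ i, (s i).Normal) ∧
      ∀ i : Fin n, (s i.succ).IsCyclicModulo (s i.castSucc) := by
  refine exists₂_congr fun n s => and_congr_right' <| and_congr_right' <| and_congr_right' <|
    and_congr_right fun hnorm => forall_congr' fun i => ?_
  have := hnorm i.castSucc
  rw [← isCyclic_quotient_subgroupOf_iff]
  exact ⟨fun h => h this, fun h _ => h⟩

theorem isSupersolvable_of_subsingleton [Subsingleton G] : IsSupersolvable G :=
  ⟨0, fun _ => ⊥, rfl, Subsingleton.elim _ _, finZeroElim, fun _ => normal_bot, finZeroElim⟩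

theorem IsSupersolvable.of_surjective {G' : Type*} [Group G'] (h : IsSupersolvable G)
    {f : G →* G'} (hf : Function.Surjective f) : IsSupersolvable G' := by
  rw [isSupersolvable_iff_isCyclicModulo] at h ⊢
  obtain ⟨n, s, h0, hlast, hmono, hnorm, hcyc⟩ := h
  exact ⟨n, fun i => (s i).map f, by simp [h0], by simp [hlast, map_top_of_surjective f hf],
    fun i => map_mono (hmono i), fun i => (hnorm i).map f hf, fun i => (hcyc i).map f⟩

theorem IsSupersolvable.of_quotient (N : Subgroup G) [N.Normal] [IsCyclic N]
    (h : IsSupersolvable (G ⧸ N)) : IsSupersolvable G := by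
  rw [isSupersolvable_iff_isCyclicModulo] at h ⊢
  obtain ⟨n, t, h0, hlast, hmono, hnorm, hcyc⟩ := h
  refine ⟨n + 1, Fin.cons ⊥ fun i => (t i).comap (QuotientGroup.mk' N), rfl, ?_, ?_, ?_, ?_⟩
  · simp [← Fin.succ_last, hlast]
  · refine Fin.cases bot_le fun i => ?_
    simpa [← Fin.succ_castSucc] using comap_mono (hmono i)
  · refine Fin.cases normal_bot fun i => ?_
    simpa using (hnorm i).comap _
  · refine Fin.cases ?_ fun i => ?_
    · simpa [h0, QuotientGroup.ker_mk'] using isCyclicModulo_bot_iff.mpr ‹IsCyclic N›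
    · simpa [← Fin.succ_castSucc] using
        (hcyc i).comap_of_surjective (QuotientGroup.mk'_surjective N)

theorem IsSupersolvable.of_quotient_of_card_prime (N : Subgroup G) [N.Normal]
    (hN : (Nat.card N).Prime) (h : IsSupersolvable (G ⧸ N)) : IsSupersolvable G :=
  have : Fact (Nat.card N).Prime := ⟨hN⟩
  have : IsCyclic N := isCyclic_of_prime_card rfl
  .of_quotient N h

theorem IsSupersolvable.of_card_prime (hG : (Nat.card G).Prime) : IsSupersolvable G :=
  have : Subsingleton (G ⧸ (⊤ : Subgroup G)) := QuotientGroup.subsingleton_quotient_top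
  .of_quotient_of_card_prime ⊤ (card_top (G := G) ▸ hG) isSupersolvable_of_subsingleton

theorem IsSupersolvable.exists_normal_isCyclic_ne_bot [Nontrivial G] (h : IsSupersolvable G) :
    ∃ C : Subgroup G, C.Normal ∧ IsCyclic C ∧ C ≠ ⊥ := by
  rw [isSupersolvable_iff_isCyclicModulo] at h
  obtain ⟨n, s, h0, hlast, -, hnorm, hcyc⟩ := h
  obtain ⟨i, hi, hi'⟩ : ∃ i : Fin n, s i.castSucc = ⊥ ∧ s i.succ ≠ ⊥ := by
    by_contra! hcon
    have hbot (j : Fin (n + 1)) : s j = ⊥ := by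
      induction j using Fin.induction with
      | zero => exact h0
      | succ i ih => exact hcon i ih
    exact bot_ne_top (hbot (Fin.last n) ▸ hlast)
  exact ⟨s i.succ, hnorm _, isCyclicModulo_bot_iff.mp (hi ▸ hcyc i), hi'⟩

theorem IsSupersolvable.exists_normal_prime_card [Finite G] [Nontrivial G]
    (h : IsSupersolvable G) : ∃ A : Subgroup G, A.Normal ∧ (Nat.card A).Prime := by
  obtain ⟨C, hC, _, hCbot⟩ := h.exists_normal_isCyclic_ne_bot
  exact exists_normal_prime_card_of_isCyclic C hCbot

theorem IsSupersolvable.exists_prime_card_le_normalizer [Finite G] {H : Subgroup G}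
    [Nontrivial H] (h : IsSupersolvable H) :
    ∃ A ≤ H, H ≤ normalizer (A : Set G) ∧ (Nat.card A).Prime := by
  obtain ⟨B, hB, hBcard⟩ := h.exists_normal_prime_card
  refine ⟨B.map H.subtype, map_subtype_le B, ?_, ?_⟩
  · rwa [← normal_subgroupOf_iff_le_normalizer (map_subtype_le B), subgroupOf,
      comap_map_eq_self_of_injective H.subtype_injective]
  · rwa [card_map_of_injective H.subtype_injective]

end Supersolvable

namespace IsNRSubgroup

variable {G : Type*} [Group G] {H : Subgroup G}

theorem map {G' : Type*} [Group G'] (hH : IsNRSubgroup H) {f : G →* G'}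
    (hf : Function.Surjective f) (hker : f.ker ≤ H) : IsNRSubgroup (H.map f) := by
  intro K' hK'H hK'
  set K := K'.comap f
  have hcomap_map {L : Subgroup G} (hL : f.ker ≤ L) : (L.map f).comap f = L := by
    rw [comap_map_eq, sup_of_le_left hL]
  have hKH : K ≤ H := hcomap_map hker ▸ comap_mono hK'H
  have hnc : normalClosure (K' : Set G') = (normalClosure (K : Set G)).map f := by
    rw [← map_comap_eq_self_of_surjective hf K', coe_map, map_normalClosure _ _ hf]
  apply comap_injective hf
  rw [comap_inf, hcomap_map hker, hnc,
    hcomap_map ((ker_le_comap f K').trans le_normalClosure)]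
  refine hH K hKH fun h hh k hk => ?_
  simpa [K] using hK' (f h) (mem_map_of_mem f hh) (f k) hk

theorem inf_normalClosure_eq (hNR : IsNRSubgroup H) {A : Subgroup G} (hAH : A ≤ H)
    (hHA : H ≤ normalizer (A : Set G)) : H ⊓ normalClosure (A : Set G) = A :=
  hNR A hAH fun _ hh a ha => (mem_normalizer_iff.mp (hHA hh) a).mp ha

theorem card_normalClosure [Finite G] (hNR : IsNRSubgroup H) (hH : H.index.Prime)
    {A : Subgroup G} (hAH : A ≤ H) (hHA : H ≤ normalizer (A : Set G)) (hA : ¬A.Normal) :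
    Nat.card (normalClosure (A : Set G)) = H.index * Nat.card A := by
  set M := normalClosure (A : Set G)
  have hHM : H ⊓ M = A := hNR.inf_normalClosure_eq hAH hHA
  have hMH : ¬M ≤ H := fun hMH =>
    hA (by rw [← hHM, inf_of_le_right hMH]; exact normalClosure_normal)
  have hsup : H ⊔ M = ⊤ := (eq_or_eq_top_of_le_of_index_prime hH le_sup_left).resolve_left
    fun h => hMH (h ▸ le_sup_right)
  have hMidx : M.index = A.relIndex H := by
    rw [← relIndex_top_right, ← hsup, relIndex_sup_right, ← inf_relIndex_left, hHM]
  refine Nat.eq_of_mul_eq_mul_right (Nat.pos_of_ne_zero (FiniteIndex.index_ne_zero (H := M))) ?_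
  calc Nat.card M * M.index = Nat.card A * A.index := by rw [card_mul_index, card_mul_index]
    _ = H.index * Nat.card A * M.index := by rw [← relIndex_mul_index hAH, hMidx]; ring

theorem exists_normal_prime_card_sup_eq_top [Finite G] (hNR : IsNRSubgroup H)
    (hH : H.index.Prime) {A : Subgroup G} (hAH : A ≤ H) (hHA : H ≤ normalizer (A : Set G))
    (hAq : (Nat.card A).Prime) (hA : ¬A.Normal) :
    ∃ N : Subgroup G, N.Normal ∧ (Nat.card N).Prime ∧ H ⊔ N = ⊤ := by
  set M := normalClosure (A : Set G)
  have hHM : H ⊓ M = A := hNR.inf_normalClosure_eq hAH hHA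
  have hAM : A ≤ M := le_normalClosure
  have : Fact H.index.Prime := ⟨hH⟩
  have : Fact (Nat.card A).Prime := ⟨hAq⟩
  have hA'card : Nat.card (A.subgroupOf M) = Nat.card A :=
    Nat.card_congr (subgroupOfEquivOfLe hAM).toEquiv
  have hA'norm : normalizer ((A.subgroupOf M : Subgroup M) : Set M) = A.subgroupOf M := by
    rw [← subgroupOf_normalizer_eq hAM, normalizer_eq_of_index_prime hH hHA hA,
      ← inf_subgroupOf_right, hHM]
  obtain ⟨K, hK, hKcard⟩ := exists_characteristic_card_eq_of_normalizer_eq_self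
    (hNR.card_normalClosure hH hAH hHA hA) hA'card hA'norm
  set N := K.map M.subtype
  have hNcard : Nat.card N = H.index := by
    rw [card_map_of_injective M.subtype_injective, hKcard]
  have hNH : ¬N ≤ H := by
    intro hNH
    have hNA : N ≤ A := hHM ▸ le_inf hNH (map_subtype_le K)
    have hdvd := card_dvd_of_le hNA
    rw [hNcard, Nat.prime_dvd_prime_iff_eq hH hAq] at hdvd
    exact hA (eq_of_le_of_card_ge hNA (hNcard.trans hdvd).ge ▸ inferInstance)
  refine ⟨N, inferInstance, hNcard ▸ hH, ?_⟩
  exact (eq_or_eq_top_of_le_of_index_prime hH le_sup_left).resolve_left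
    fun h => hNH (h ▸ le_sup_right)

end IsNRSubgroup

theorem supersolvable_of_NR_prime_index {G : Type*} [Group G] [Finite G]
    (H : Subgroup G) (hNR : IsNRSubgroup H) (hidx : (H.index).Prime)
    (hss : IsSupersolvable H) : IsSupersolvable G := by
  induction hn : Nat.card G using Nat.strong_induction_on generalizing G with
  | _ n ih =>
  rcases subsingleton_or_nontrivial H with hH | hH
  · rw [eq_bot_of_subsingleton H, index_bot] at hidx
    exact .of_card_prime hidx
  obtain ⟨A, hAH, hHA, hAcard⟩ := hss.exists_prime_card_le_normalizer
  by_cases hA : A.Normal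
  · have hker : (QuotientGroup.mk' A).ker ≤ H := (QuotientGroup.ker_mk' A).trans_le hAH
    have hπ := QuotientGroup.mk'_surjective A
    have hcard : Nat.card (G ⧸ A) < n := by
      rw [← hn, card_eq_card_quotient_mul_card_subgroup A]
      exact lt_mul_of_one_lt_right Nat.card_pos hAcard.one_lt
    have hidx' : (H.map (QuotientGroup.mk' A)).index.Prime := by rwa [index_map_eq H hπ hker]
    exact .of_quotient_of_card_prime A hAcard <| ih _ hcard _ (hNR.map hπ hker) hidx'
      (hss.of_surjective ((QuotientGroup.mk' A).subgroupMap_surjective H)) rfl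
  · obtain ⟨N, hN, hNcard, hHN⟩ :=
      hNR.exists_normal_prime_card_sup_eq_top hidx hAH hHA hAcard hA
    exact .of_quotient_of_card_prime N hNcard
      (hss.of_surjective (QuotientGroup.mk'_comp_subtype_surjective hHN))
end

section
/- Let G be a finite group in which every non-nilpotent maximal subgroup is either normal in G or an NR-subgroup of G. If K ⊴ G, then every non-nilpotent maximal subgroup of G/K is either normal in G/K or an NR-subgroup of G/K. -/
theorem quotient_inherits_hypothesis {G : Type*} [Group G] [Finite G] (K : Subgroup G)
    (hK : K.Normal)
    (h : ∀ M : Subgroup G, IsCoatom M → ¬ Group.IsNilpotent M → M.Normal ∨ IsNRSubgroup M) :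
    ∀ M : Subgroup (G ⧸ K), IsCoatom M → ¬ Group.IsNilpotent M →
      M.Normal ∨ IsNRSubgroup M := by
  intro M hM hMnil
  set π := QuotientGroup.mk' K with hπ
  have hsurj : Function.Surjective π := QuotientGroup.mk'_surjective K
  have hker : π.ker = K := QuotientGroup.ker_mk' K
  set M' : Subgroup G := M.comap π with hM'def
  have hmapM' : M'.map π = M := Subgroup.map_comap_eq_self_of_surjective hsurj M
  -- M' is a coatom
  have hM'coatom : IsCoatom M' := by
    constructor
    · intro htop
      apply hM.1
      rw [← hmapM', htop, Subgroup.map_top_of_surjective π hsurj]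
    · intro N hN
      have hKN : π.ker ≤ N := by
        rw [hker]
        intro x hx
        have hxM' : x ∈ M' := by
          show π x ∈ M
          rw [show π x = 1 from (QuotientGroup.eq_one_iff x).mpr hx]
          exact M.one_mem
        exact hN.le hxM'
      have hcm : (N.map π).comap π = N := by
        rw [Subgroup.comap_map_eq, sup_eq_left.mpr hKN]
      have hlt : M < N.map π := by
        refine lt_of_le_of_ne ?_ ?_
        · rw [← hmapM']; exact Subgroup.map_mono hN.le
        · intro he
          have : M' = N := by rw [hM'def, he, hcm]
          exact hN.ne this
      have htop := hM.2 _ hlt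
      rw [← hcm, htop]
      exact Subgroup.comap_top π
  -- M' is not nilpotent
  have hM'nil : ¬ Group.IsNilpotent M' := by
    intro hn
    apply hMnil
    have fsurj : Function.Surjective (π.subgroupMap M') := by
      rintro ⟨y, hy⟩
      obtain ⟨x, hx, rfl⟩ := hy
      exact ⟨⟨x, hx⟩, rfl⟩
    have : Group.IsNilpotent (M'.map π) := nilpotent_of_surjective _ fsurj
    rwa [hmapM'] at this
  rcases h M' hM'coatom hM'nil with hnorm | hNR
  · left
    rw [← hmapM']
    exact Subgroup.Normal.map hnorm π hsurj
  · right
    intro L hLM hLconj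
    set L' : Subgroup G := L.comap π with hL'def
    have hL'M' : L' ≤ M' := Subgroup.comap_mono hLM
    have hL'conj : ∀ a ∈ M', ∀ k ∈ L', a * k * a⁻¹ ∈ L' := by
      intro a ha k hk
      have : π (a * k * a⁻¹) = π a * π k * (π a)⁻¹ := by simp
      show π (a * k * a⁻¹) ∈ L
      rw [this]
      exact hLconj _ ha _ hk
    have key := hNR L' hL'M' hL'conj
    have hmapL' : L'.map π = L := Subgroup.map_comap_eq_self_of_surjective hsurj L
    have hNC : (Subgroup.normalClosure (L' : Set G)).map π
        = Subgroup.normalClosure (L : Set (G ⧸ K)) := by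
      rw [Subgroup.map_normalClosure _ _ hsurj]
      congr 1
      rw [← hmapL']
      rfl
    apply le_antisymm
    · intro x hx
      obtain ⟨hxM, hxN⟩ := hx
      obtain ⟨g, rfl⟩ := hsurj x
      have hgM' : g ∈ M' := hxM
      have hgN : g ∈ (Subgroup.normalClosure (L : Set (G ⧸ K))).comap π := hxN
      rw [← hNC, Subgroup.comap_map_eq] at hgN
      have hkerle : π.ker ≤ Subgroup.normalClosure (L' : Set G) := by
        rw [hker]
        refine le_trans ?_ (Subgroup.le_normalClosure (H := L'))
        intro x hx
        show π x ∈ L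
        rw [show π x = 1 from (QuotientGroup.eq_one_iff x).mpr hx]
        exact L.one_mem
      rw [sup_eq_left.mpr hkerle] at hgN
      have : g ∈ M' ⊓ Subgroup.normalClosure (L' : Set G) := ⟨hgM', hgN⟩
      rw [key] at this
      exact this
    · exact le_inf hLM (Subgroup.le_normalClosure (H := L))
end
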